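/- If Φ, Ψ ∈ S_p* for some p ≥ 0, then their Wick product Φ◇Ψ, defined by (Φ◇Ψ)^(σ) = ∑_{τ⊆σ} Φ̂(τ) Ψ̂(σ\τ), belongs to S_{p+1}*, with ‖Φ◇Ψ‖_{-(p+1)}² ≤ ‖Φ‖_{-p}² ‖Ψ‖_{-p}² ∑_{σ∈Γ} λ_σ^{-2}. -/

import Mathlib

/-!
Weighting by `λ_σ^{-p}` commutes with the Wick convolution `∑_{τ⊆σ} a(τ) b(σ \ τ)`, because
`λ_σ = λ_τ λ_{σ\τ}`. So `λ_σ^{-(p+1)} |(Φ◇Ψ)^(σ)|` is `λ_σ^{-1}` times the Wick convolution of the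
weighted sequences `λ^{-p} a` and `λ^{-p} b`, which Cauchy–Schwarz over the subsets of `σ` bounds by
`‖Φ‖_{-p} ‖Ψ‖_{-p}`. It remains that `∑_σ λ_σ^{-2} = ∏_k (1 + (1+k)^{-2})` is finite.
-/

open scoped BigOperators

/-- `lam σ = ∏_{k∈σ} (1+k)`. -/
noncomputable def lam (σ : Finset ℕ) : ℝ := ∏ k ∈ σ, (1 + k : ℝ)

namespace Finset

theorem sum_powerset_sdiff {α M : Type*} [DecidableEq α] [AddCommMonoid M] (s : Finset α)
    (f : Finset α → M) : ∑ t ∈ s.powerset, f (s \ t) = ∑ t ∈ s.powerset, f t :=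
  sum_nbij' (s \ ·) (s \ ·) (fun _ _ => by simp) (fun _ _ => by simp)
    (fun _ ht => sdiff_sdiff_eq_self (mem_powerset.mp ht))
    (fun _ ht => sdiff_sdiff_eq_self (mem_powerset.mp ht)) (fun _ _ => rfl)

end Finset

section Wick

variable {α R : Type*} [DecidableEq α]

/-- The Wick product in terms of Fock transforms. -/
def wick [Mul R] [AddCommMonoid R] (a b : Finset α → R) (σ : Finset α) : R :=
  ∑ τ ∈ σ.powerset, a τ * b (σ \ τ)

theorem norm_wick_sq_le [SeminormedRing R] (a b : Finset α → R) (σ : Finset α) :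
    ‖wick a b σ‖ ^ 2 ≤ (∑ τ ∈ σ.powerset, ‖a τ‖ ^ 2) * ∑ τ ∈ σ.powerset, ‖b τ‖ ^ 2 := by
  have htriangle : ‖wick a b σ‖ ≤ ∑ τ ∈ σ.powerset, ‖a τ‖ * ‖b (σ \ τ)‖ :=
    (norm_sum_le _ _).trans (Finset.sum_le_sum fun τ _ => norm_mul_le _ _)
  calc ‖wick a b σ‖ ^ 2 ≤ (∑ τ ∈ σ.powerset, ‖a τ‖ * ‖b (σ \ τ)‖) ^ 2 := by gcongr
    _ ≤ (∑ τ ∈ σ.powerset, ‖a τ‖ ^ 2) * ∑ τ ∈ σ.powerset, ‖b (σ \ τ)‖ ^ 2 :=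
      Finset.sum_mul_sq_le_sq_mul_sq _ _ _
    _ = _ := by rw [Finset.sum_powerset_sdiff σ (fun τ => ‖b τ‖ ^ 2)]

theorem smul_wick_of_mul_sdiff [Ring R] [Algebra ℝ R] {w : Finset α → ℝ} {σ : Finset α}
    (hw : ∀ τ ⊆ σ, w τ * w (σ \ τ) = w σ) (a b : Finset α → R) :
    w σ • wick a b σ = wick (fun τ => w τ • a τ) (fun τ => w τ • b τ) σ := by
  rw [wick, Finset.smul_sum]
  refine Finset.sum_congr rfl fun τ hτ => ?_
  rw [smul_mul_smul_comm, hw τ (Finset.mem_powerset.mp hτ)]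

end Wick

theorem lam_pos (σ : Finset ℕ) : 0 < lam σ :=
  Finset.prod_pos fun _ _ => by positivity

theorem lam_rpow_mul_sdiff (r : ℝ) {τ σ : Finset ℕ} (h : τ ⊆ σ) :
    lam τ ^ r * lam (σ \ τ) ^ r = lam σ ^ r := by
  rw [← Real.mul_rpow (lam_pos τ).le (lam_pos _).le, lam, lam, mul_comm, Finset.prod_sdiff h, lam]

theorem lam_rpow_neg_sq (p : ℝ) (σ : Finset ℕ) : (lam σ ^ (-p)) ^ 2 = lam σ ^ (-(2 * p)) := by
  rw [← Real.rpow_natCast, ← Real.rpow_mul (lam_pos σ).le]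
  ring_nf

theorem summable_lam_rpow_neg_two : Summable fun σ : Finset ℕ => lam σ ^ (-(2 : ℝ)) := by
  have hterm : ∀ σ, lam σ ^ (-(2 : ℝ)) = ∏ k ∈ σ, ((1 + (k : ℝ)) ^ 2)⁻¹ := fun σ => by
    rw [Real.rpow_neg (lam_pos σ).le, Real.rpow_two, lam, ← Finset.prod_pow,
      Finset.prod_inv_distrib]
  have hsummable : Summable fun k : ℕ => ((1 + (k : ℝ)) ^ 2)⁻¹ := by
    simpa [add_comm, one_div] using
      (summable_nat_add_iff 1).mpr (Real.summable_one_div_nat_pow.mpr one_lt_two)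
  simpa only [hterm] using
    summable_finsetProd_of_summable_nonneg (fun _ => by positivity) hsummable

theorem norm_lam_rpow_smul_sq (p : ℝ) (a : Finset ℕ → ℂ) (σ : Finset ℕ) :
    ‖lam σ ^ (-p) • a σ‖ ^ 2 = lam σ ^ (-(2 * p)) * ‖a σ‖ ^ 2 := by
  rw [norm_smul, Real.norm_of_nonneg (Real.rpow_nonneg (lam_pos σ).le _), mul_pow,
    lam_rpow_neg_sq]

theorem lam_rpow_mul_norm_wick_sq_le (p : ℝ) {a b : Finset ℕ → ℂ}
    (ha : Summable fun σ : Finset ℕ => lam σ ^ (-(2 * p)) * ‖a σ‖ ^ 2)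
    (hb : Summable fun σ : Finset ℕ => lam σ ^ (-(2 * p)) * ‖b σ‖ ^ 2) (σ : Finset ℕ) :
    lam σ ^ (-(2 * (p + 1))) * ‖wick a b σ‖ ^ 2 ≤
      (∑' σ, lam σ ^ (-(2 * p)) * ‖a σ‖ ^ 2) * (∑' σ, lam σ ^ (-(2 * p)) * ‖b σ‖ ^ 2) *
        lam σ ^ (-(2 : ℝ)) := by
  have hweight : lam σ ^ (-p) • wick a b σ =
      wick (fun τ => lam τ ^ (-p) • a τ) (fun τ => lam τ ^ (-p) • b τ) σ :=
    smul_wick_of_mul_sdiff (fun _ h => lam_rpow_mul_sdiff _ h) a b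
  have hsplit : lam σ ^ (-(2 * (p + 1))) * ‖wick a b σ‖ ^ 2 =
      lam σ ^ (-(2 : ℝ)) * ‖lam σ ^ (-p) • wick a b σ‖ ^ 2 := by
    rw [norm_lam_rpow_smul_sq, ← mul_assoc, ← Real.rpow_add (lam_pos σ)]
    ring_nf
  have hnonneg : ∀ (c : Finset ℕ → ℂ) τ, 0 ≤ lam τ ^ (-(2 * p)) * ‖c τ‖ ^ 2 := fun _ τ =>
    mul_nonneg (Real.rpow_nonneg (lam_pos τ).le _) (sq_nonneg _)
  rw [hsplit, hweight, mul_comm _ (lam σ ^ _)]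
  refine mul_le_mul_of_nonneg_left ((norm_wick_sq_le _ _ σ).trans ?_)
    (Real.rpow_nonneg (lam_pos σ).le _)
  simp only [norm_lam_rpow_smul_sq]
  exact mul_le_mul (ha.sum_le_tsum _ fun τ _ => hnonneg a τ)
    (hb.sum_le_tsum _ fun τ _ => hnonneg b τ) (Finset.sum_nonneg fun τ _ => hnonneg b τ)
    (tsum_nonneg (hnonneg a))

theorem stmt17_general (p : ℝ) (a b : Finset ℕ → ℂ)
    (ha : Summable (fun σ : Finset ℕ => lam σ ^ (-(2 * p)) * ‖a σ‖ ^ 2))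
    (hb : Summable (fun σ : Finset ℕ => lam σ ^ (-(2 * p)) * ‖b σ‖ ^ 2)) :
    Summable (fun σ : Finset ℕ =>
      lam σ ^ (-(2 * (p + 1))) * ‖∑ τ ∈ σ.powerset, a τ * b (σ \ τ)‖ ^ 2) ∧
    (∑' σ : Finset ℕ,
        lam σ ^ (-(2 * (p + 1))) * ‖∑ τ ∈ σ.powerset, a τ * b (σ \ τ)‖ ^ 2) ≤
      (∑' σ : Finset ℕ, lam σ ^ (-(2 * p)) * ‖a σ‖ ^ 2) *
        (∑' σ : Finset ℕ, lam σ ^ (-(2 * p)) * ‖b σ‖ ^ 2) *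
          (∑' σ : Finset ℕ, lam σ ^ (-(2 : ℝ))) := by
  have hbound := lam_rpow_mul_norm_wick_sq_le p ha hb
  have hdom := summable_lam_rpow_neg_two.mul_left
    ((∑' σ, lam σ ^ (-(2 * p)) * ‖a σ‖ ^ 2) * ∑' σ, lam σ ^ (-(2 * p)) * ‖b σ‖ ^ 2)
  have hsummable := hdom.of_nonneg_of_le
    (fun σ => mul_nonneg (Real.rpow_nonneg (lam_pos σ).le _) (sq_nonneg _)) hbound
  exact ⟨hsummable, (hsummable.tsum_le_tsum hbound hdom).trans_eq tsum_mul_left⟩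

/-- **The Wick product maps `S_p* × S_p*` to `S_{p+1}*`.** Represent `Φ, Ψ ∈ S_p*` by
their Fock transforms `a = Φ̂`, `b = Ψ̂`, so that `‖Φ‖_{-p}² = ∑_σ λ_σ^{-2p}|a σ|² < ∞`.
The Wick product has Fock transform `(Φ◇Ψ)^(σ) = ∑_{τ⊆σ} a(τ) b(σ\\τ)`. Then
`Φ◇Ψ ∈ S_{p+1}*` with `‖Φ◇Ψ‖_{-(p+1)}² ≤ ‖Φ‖_{-p}² ‖Ψ‖_{-p}² ∑_σ λ_σ^{-2}`. -/
theorem stmt17 (p : ℝ) (hp : 0 ≤ p) (a b : Finset ℕ → ℂ)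
    (ha : Summable (fun σ : Finset ℕ => lam σ ^ (-(2 * p)) * ‖a σ‖ ^ 2))
    (hb : Summable (fun σ : Finset ℕ => lam σ ^ (-(2 * p)) * ‖b σ‖ ^ 2)) :
    Summable (fun σ : Finset ℕ =>
      lam σ ^ (-(2 * (p + 1))) * ‖∑ τ ∈ σ.powerset, a τ * b (σ \ τ)‖ ^ 2) ∧
    (∑' σ : Finset ℕ,
        lam σ ^ (-(2 * (p + 1))) * ‖∑ τ ∈ σ.powerset, a τ * b (σ \ τ)‖ ^ 2) ≤
      (∑' σ : Finset ℕ, lam σ ^ (-(2 * p)) * ‖a σ‖ ^ 2) *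
        (∑' σ : Finset ℕ, lam σ ^ (-(2 * p)) * ‖b σ‖ ^ 2) *
          (∑' σ : Finset ℕ, lam σ ^ (-(2 : ℝ))) :=
  stmt17_general p a b ha hb
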